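/- arXiv:1808.04915 — 2 statements merged into one kernel-verified Lean document; each statement's English description precedes it below -/
import Mathlib

section
/- Let C and D be categories with functors F : C → D and U : D → C, and suppose there exist natural transformations η : id_C ⇒ U F and ε : id_D ⇒ F U (directions as stated). Then F induces an equivalence of fundamental groupoids Π₁(C) ≃ Π₁(D). In particular, for every object X of C, π₁(C, X) ≅ π₁(D, F X). -/
/-!
A natural transformation `α : F ⟶ G` becomes invertible after localizing at all morphisms, so
`Pi1Map F ≅ Pi1Map G`; together with `Pi1Map (F ⋙ G) ≅ Pi1Map F ⋙ Pi1Map G` and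
`Pi1Map (𝟭 C) ≅ 𝟭`, the transformations `η` and `ε` give the unit and counit of an equivalence
with quasi-inverse `Pi1Map U`. A fully faithful functor preserves automorphism groups.
-/

open CategoryTheory

universe v v' u u'

/-- The fundamental groupoid of a category: its localization at all morphisms. -/
abbrev Pi1 (C : Type u) [Category.{v} C] := (⊤ : MorphismProperty C).Localization

/-- The canonical functor to the fundamental groupoid. -/
abbrev pi1Q (C : Type u) [Category.{v} C] : C ⥤ Pi1 C := (⊤ : MorphismProperty C).Q

instance pi1QMapIsIso {C : Type u} [Category.{v} C] {X Y : C} (f : X ⟶ Y) :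
    IsIso ((pi1Q C).map f) :=
  (⊤ : MorphismProperty C).Q_inverts f (MorphismProperty.top_apply f)

/-- Functoriality of the fundamental groupoid. -/
noncomputable def Pi1Map {C : Type u} [Category.{v} C] {D : Type u'} [Category.{v'} D] (F : C ⥤ D) :
    Pi1 C ⥤ Pi1 D :=
  Localization.Construction.lift (F ⋙ pi1Q D)
    (fun _ _ f _ => by dsimp; infer_instance)

instance isGroupoid_functor {C D : Type*} [Category C] [Category D] [IsGroupoid D] :
    IsGroupoid (C ⥤ D) where
  all_isIso α := NatIso.isIso_of_isIso_app α

namespace Pi1Map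

variable {C : Type u} [Category.{v} C] {D : Type u'} [Category.{v'} D]

noncomputable instance lifting (F : C ⥤ D) :
    Localization.Lifting (pi1Q C) ⊤ (F ⋙ pi1Q D) (Pi1Map F) :=
  Localization.liftingConstructionLift _ _

noncomputable def idIso : Pi1Map (𝟭 C) ≅ 𝟭 (Pi1 C) :=
  Localization.liftNatIso (pi1Q C) ⊤ (𝟭 C ⋙ pi1Q C) (pi1Q C) _ _ (Functor.leftUnitor _)

noncomputable def compIso {E : Type*} [Category E] (F : C ⥤ D) (G : D ⥤ E) :
    Pi1Map (F ⋙ G) ≅ Pi1Map F ⋙ Pi1Map G :=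
  Localization.liftNatIso (pi1Q C) ⊤ ((F ⋙ G) ⋙ pi1Q E) ((F ⋙ pi1Q D) ⋙ Pi1Map G) _ _
    (Functor.associator _ _ _ ≪≫
      Functor.isoWhiskerLeft F (Localization.Lifting.iso (pi1Q D) ⊤ _ (Pi1Map G)).symm ≪≫
      (Functor.associator _ _ _).symm)

noncomputable def isoOfNatTrans {F G : C ⥤ D} (α : F ⟶ G) : Pi1Map F ≅ Pi1Map G :=
  asIso <| Localization.liftNatTrans (pi1Q C) ⊤ (F ⋙ pi1Q D) (G ⋙ pi1Q D) _ _
    (Functor.whiskerRight α (pi1Q D))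

noncomputable def objIso (F : C ⥤ D) (X : C) :
    (Pi1Map F).obj ((pi1Q C).obj X) ≅ (pi1Q D).obj (F.obj X) :=
  (Localization.Lifting.iso (pi1Q C) ⊤ (F ⋙ pi1Q D) (Pi1Map F)).app X

theorem isEquivalence_of_natTrans {F : C ⥤ D} {U : D ⥤ C}
    (η : 𝟭 C ⟶ F ⋙ U) (ε : 𝟭 D ⟶ U ⋙ F) : (Pi1Map F).IsEquivalence :=
  CategoryTheory.Equivalence.isEquivalence_functor <|
    .mk (Pi1Map F) (Pi1Map U)
      (idIso.symm ≪≫ isoOfNatTrans η ≪≫ compIso F U)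
      ((compIso U F).symm ≪≫ (isoOfNatTrans ε).symm ≪≫ idIso)

end Pi1Map

/-- If `F : C ⥤ D` and `U : D ⥤ C` admit natural transformations `𝟭 C ⟶ F ⋙ U` and
`𝟭 D ⟶ U ⋙ F`, then `F` induces an equivalence of fundamental groupoids; in particular
`π₁(C, X) ≅ π₁(D, F X)` for every object `X`. -/
theorem stmt_18 {C : Type u} [Category.{v} C] {D : Type u'} [Category.{v'} D]
    (F : C ⥤ D) (U : D ⥤ C) (η : 𝟭 C ⟶ F ⋙ U) (ε : 𝟭 D ⟶ U ⋙ F) :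
    (Pi1Map F).IsEquivalence ∧
      ∀ X : C, Nonempty (Aut ((pi1Q C).obj X) ≃* Aut ((pi1Q D).obj (F.obj X))) := by
  have := Pi1Map.isEquivalence_of_natTrans η ε
  refine ⟨inferInstance, fun X => ⟨?_⟩⟩
  exact ((Functor.FullyFaithful.ofFullyFaithful (Pi1Map F)).autMulEquivOfFullyFaithful _).trans
    (Aut.autMulEquivOfIso (Pi1Map.objIso F X))
end

section
/- Let C be a category in which every morphism is a monomorphism, let B ← A → C be a span in C, and form the pushout of hom-functors: define a new category C' obtained from C by adjoining one object P with Hom(X, P) = Hom(X, B) ⊔_{Hom(X, A)} Hom(X, C) for X in C, identity on P, and no morphisms out of P except the identity. Then C' is a category (composition is well defined and associative), every morphism of C' is a monomorphism, and the given span admits an amalgam in C': there are morphisms B → P and C → P making the square with the span commute. -/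
open CategoryTheory

universe v u

variable {C : Type u} [Category.{v} C]

/-- Objects of the category obtained from `C` by adjoining a single amalgamation vertex. -/
inductive AmalgObjRaw (C : Type u) : Type u
  | of (X : C)
  | pt

section

variable {A B B' : C} (f : A ⟶ B) (g : A ⟶ B')

/-- The relation identifying `h ≫ f` and `h ≫ g` inside `Hom(X,B) ⊔ Hom(X,B')`;
its quotient is the pushout of sets `Hom(X,B) ⊔_{Hom(X,A)} Hom(X,B')`. -/
def witnessRel (X : C) : ((X ⟶ B) ⊕ (X ⟶ B')) → ((X ⟶ B) ⊕ (X ⟶ B')) → Prop :=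
  fun p q => ∃ h : X ⟶ A, p = Sum.inl (h ≫ f) ∧ q = Sum.inr (h ≫ g)

/-- Precomposition on the disjoint union of hom-sets. -/
def sumPre {X Y : C} (e : X ⟶ Y) : ((Y ⟶ B) ⊕ (Y ⟶ B')) → ((X ⟶ B) ⊕ (X ⟶ B'))
  | .inl p => .inl (e ≫ p)
  | .inr p => .inr (e ≫ p)

/-- Morphisms of the amalgamation category. -/
def AmalgHom : AmalgObjRaw C → AmalgObjRaw C → Type v
  | .of X, .of Y => X ⟶ Y
  | .of X, .pt => Quot (witnessRel f g X)
  | .pt, .of _ => PEmpty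
  | .pt, .pt => PUnit

/-- The category `C'` obtained from `C` by adjoining one object `P` with
`Hom(X, P) = Hom(X, B) ⊔_{Hom(X, A)} Hom(X, B')` and no nonidentity morphisms out
of `P`. -/
def AmalgObj (_f : A ⟶ B) (_g : A ⟶ B') : Type u := AmalgObjRaw C

/-- The elimination of an impossible morphism out of the adjoined point. -/
def AmalgHom.elimPt {X : AmalgObjRaw C} {Y : C}
    (u : AmalgHom f g X (.of Y)) (hX : X = .pt) : ∀ {motive : Sort*}, motive := by
  subst hX; exact fun {motive} => PEmpty.elim u

instance amalgCategory : Category.{v} (AmalgObj f g) where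
  Hom X Y := AmalgHom f g X Y
  id X := match X with
    | .of X => 𝟙 X
    | .pt => PUnit.unit
  comp {X Y Z} u v := match X, Y, Z, u, v with
    | .of _, .of _, .of _, u, v => u ≫ v
    | .of X, .of _, .pt, u, v =>
        Quot.lift (fun p => Quot.mk (witnessRel f g X) (sumPre u p))
          (by
            rintro p q ⟨h, rfl, rfl⟩
            exact Quot.sound ⟨u ≫ h, congrArg Sum.inl (Category.assoc u h f).symm,
              congrArg Sum.inr (Category.assoc u h g).symm⟩) v
    | .of _, .pt, .pt, u, _ => u
    | .pt, .pt, .pt, _, _ => PUnit.unit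
    | .pt, .of _, _, u, _ => PEmpty.elim u
    | .of _, .pt, .of _, _, v => PEmpty.elim v
  id_comp := by
    intro X Y u
    match X, Y, u with
    | .of _, .of _, u => exact Category.id_comp u
    | .of X, .pt, u =>
      refine Quot.inductionOn u fun p => ?_
      cases p with
      | inl p => exact congrArg (Quot.mk _) (congrArg Sum.inl (Category.id_comp p))
      | inr p => exact congrArg (Quot.mk _) (congrArg Sum.inr (Category.id_comp p))
    | .pt, .of _, u => exact PEmpty.elim u
    | .pt, .pt, u => rfl
  comp_id := by
    intro X Y u
    match X, Y, u with
    | .of _, .of _, u => exact Category.comp_id u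
    | .of X, .pt, u => rfl
    | .pt, .of _, u => exact PEmpty.elim u
    | .pt, .pt, u => rfl
  assoc := by
    intro W X Y Z u v w
    match W, X, Y, Z, u, v, w with
    | .of _, .of _, .of _, .of _, u, v, w => exact Category.assoc u v w
    | .of _, .of _, .of _, .pt, u, v, w =>
      refine Quot.inductionOn w fun p => ?_
      cases p with
      | inl p => exact congrArg (Quot.mk _) (congrArg Sum.inl (Category.assoc u v p))
      | inr p => exact congrArg (Quot.mk _) (congrArg Sum.inr (Category.assoc u v p))
    | .of _, .of _, .pt, .pt, u, v, w => rfl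
    | .of _, .pt, .pt, .pt, u, v, w => rfl
    | .pt, .pt, .pt, .pt, u, v, w => rfl
    | .pt, .of _, _, _, u, v, w => exact PEmpty.elim u
    | .of _, .pt, .of _, _, u, v, w => exact PEmpty.elim v
    | .pt, .pt, .of _, _, u, v, w => exact PEmpty.elim v
    | .of _, .of _, .pt, .of _, u, v, w => exact PEmpty.elim w
    | .of _, .pt, .pt, .of _, u, v, w => exact PEmpty.elim w
    | .pt, .pt, .pt, .of _, u, v, w => exact PEmpty.elim w

/-- The adjoined amalgamation vertex. -/
def amalgPt : AmalgObj f g := AmalgObjRaw.pt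

/-- The inclusion of `C` into the amalgamation category. -/
def amalgIncl : C ⥤ AmalgObj f g where
  obj X := AmalgObjRaw.of X
  map {X Y} u := (u : AmalgHom f g (.of X) (.of Y))
  map_id _ := rfl
  map_comp _ _ := rfl

variable {f g}

theorem witnessRel_quot_inl_injective [Mono g] (X : C) :
    Function.Injective fun p : X ⟶ B => Quot.mk (witnessRel f g X) (.inl p) := by
  -- The set of `B`-components a class can have; as `g` is mono, that of `inl p` is `{p}`.
  let part : (X ⟶ B) ⊕ (X ⟶ B') → Set (X ⟶ B) :=
    Sum.elim (fun p => {p}) (fun q => {p | ∃ h, h ≫ f = p ∧ h ≫ g = q})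
  have hpart : ∀ x y, witnessRel f g X x y → part x = part y := by
    rintro _ _ ⟨h, rfl, rfl⟩
    ext p
    simp [part, cancel_mono, eq_comm]
  intro p q hpq
  simpa [part] using congrArg (Quot.lift part hpart) hpq

theorem witnessRel_quot_inr_injective [Mono f] (X : C) :
    Function.Injective fun q : X ⟶ B' => Quot.mk (witnessRel f g X) (.inr q) := by
  let part : (X ⟶ B) ⊕ (X ⟶ B') → Set (X ⟶ B') :=
    Sum.elim (fun p => {q | ∃ h, h ≫ f = p ∧ h ≫ g = q}) (fun q => {q})
  have hpart : ∀ x y, witnessRel f g X x y → part x = part y := by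
    rintro _ _ ⟨h, rfl, rfl⟩
    ext q
    simp [part, cancel_mono, eq_comm]
  intro p q hpq
  simpa [part] using congrArg (Quot.lift part hpart) hpq

theorem amalgIncl_map_cancel_of_comp_eq (hmono : ∀ {X Y : C} (u : X ⟶ Y), Mono u) {Z X : C}
    {a b : Z ⟶ X} (u : (amalgIncl f g).obj X ⟶ amalgPt f g)
    (h : (amalgIncl f g).map a ≫ u = (amalgIncl f g).map b ≫ u) : a = b := by
  have := hmono f
  have := hmono g
  obtain ⟨x, rfl⟩ := Quot.exists_rep (r := witnessRel f g X) u
  rcases x with p | q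
  · have := hmono p
    exact (cancel_mono p).mp (witnessRel_quot_inl_injective Z (a₁ := a ≫ p) (a₂ := b ≫ p) h)
  · have := hmono q
    exact (cancel_mono q).mp (witnessRel_quot_inr_injective Z (a₁ := a ≫ q) (a₂ := b ≫ q) h)

theorem amalgObj_mono (hmono : ∀ {X Y : C} (u : X ⟶ Y), Mono u) {X Y : AmalgObj f g}
    (u : X ⟶ Y) : Mono u := by
  cases X with
  | pt =>
    cases Y with
    | of Y => exact PEmpty.elim u
    | pt =>
      obtain rfl : u = 𝟙 _ := rfl
      exact inferInstanceAs (Mono (𝟙 (amalgPt f g)))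
  | of X =>
    constructor
    intro Z a b hab
    cases Z with
    | pt => exact PEmpty.elim a
    | of Z =>
      cases Y with
      | of Y => exact (hmono u).right_cancellation a b hab
      | pt => exact amalgIncl_map_cancel_of_comp_eq hmono u hab

variable (f g)

def amalgInl : (amalgIncl f g).obj B ⟶ amalgPt f g := Quot.mk _ (.inl (𝟙 B))

def amalgInr : (amalgIncl f g).obj B' ⟶ amalgPt f g := Quot.mk _ (.inr (𝟙 B'))

theorem amalg_condition :
    (amalgIncl f g).map f ≫ amalgInl f g = (amalgIncl f g).map g ≫ amalgInr f g :=
  Quot.sound ⟨𝟙 A, congrArg Sum.inl (by simp [amalgIncl]),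
    congrArg Sum.inr (by simp [amalgIncl])⟩

/-- Single-step amalgamation: if every morphism of `C` is a monomorphism, then in the
category `C'` obtained by adjoining the pushout-of-homs object `P` to the span
`B ← A → B'`, every morphism is again a monomorphism, and the span admits an amalgam:
morphisms `B → P` and `B' → P` making the square with the span commute. -/
theorem stmt_19 (hmono : ∀ {X Y : C} (u : X ⟶ Y), Mono u) :
    (∀ {X Y : AmalgObj f g} (u : X ⟶ Y), Mono u) ∧
      ∃ (β : (amalgIncl f g).obj B ⟶ amalgPt f g)
        (γ : (amalgIncl f g).obj B' ⟶ amalgPt f g),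
        (amalgIncl f g).map f ≫ β = (amalgIncl f g).map g ≫ γ :=
  ⟨amalgObj_mono hmono, amalgInl f g, amalgInr f g, amalg_condition f g⟩

end
end
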